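/- Let Q be an n×n Stieltjes matrix and π a permutation of [n]. With S_k^π = {π_1, …, π_k}, S_0^π = ∅, and R(π_k; S_{k-1}^π) = (Q ∘ e_{S_k^π} e_{S_k^π}⊤)† − (Q ∘ e_{S_{k-1}^π} e_{S_{k-1}^π}⊤)†, one has Σ_{k=1}^n R(π_k; S_{k-1}^π) = Q⁻¹ (telescoping), and each R(π_k; S_{k-1}^π) is positive semidefinite of rank at most one. -/

import Mathlib

/-!
A symmetric `B` supported on `S × S` with `B * mask Q S = coordProj S` (the inverse of the
principal submatrix `Q[S, S]`, padded with zeros) satisfies the four Moore–Penrose equations for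
`mask Q S`, so by uniqueness it is `pinv (mask Q S)`. When an index `j ∉ S` is added, the bordered
inverse formula gives the new padded inverse as `B + s⁻¹ • vecMulVec v v`, where `v` is the
vector `(-Q[S, S]⁻¹ Q[S, j], 1)` and `s = vᵀ Q v > 0` is the Schur complement. Hence every
increment along the chain `∅ = S₀ ⊂ S₁ ⊂ ⋯ ⊂ Sₙ = [n]` is positive semidefinite of rank at most
one, and the increments telescope from `pinv 0 = 0` to `pinv Q = Q⁻¹`.
-/

open Matrix
open scoped Classical

/-- The Moore–Penrose pseudoinverse of a real square matrix, defined via its four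
characterizing equations (and `0` if no such matrix exists; by uniqueness of the
Moore–Penrose pseudoinverse, when it exists this definition picks it out). -/
noncomputable def pinv {m : Type*} [Fintype m] [DecidableEq m]
    (A : Matrix m m ℝ) : Matrix m m ℝ :=
  if h : ∃ B : Matrix m m ℝ,
      A * B * A = A ∧ B * A * B = B ∧ (A * B)ᵀ = A * B ∧ (B * A)ᵀ = B * A
  then h.choose else 0

/-- `Q ∘ e_S e_Sᵀ`: the matrix agreeing with `Q` on entries indexed by `S × S`,
and zero elsewhere. -/
def mask {n : ℕ} (Q : Matrix (Fin n) (Fin n) ℝ) (S : Finset (Fin n)) :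
    Matrix (Fin n) (Fin n) ℝ :=
  Matrix.of fun i j => if i ∈ S ∧ j ∈ S then Q i j else 0

/-- `S_k^π = {π_1, …, π_k}`, the image under the permutation `π` of the first `k`
positions (`S_0^π = ∅`). -/
def Sk {n : ℕ} (π : Equiv.Perm (Fin n)) (k : ℕ) : Finset (Fin n) :=
  (Finset.univ.filter fun i : Fin n => (i : ℕ) < k).image π

/-- `R(π_{k+1}; S_k^π)`: the increment of the restricted pseudoinverses along the chain. -/
noncomputable def Rinc {n : ℕ} (Q : Matrix (Fin n) (Fin n) ℝ) (π : Equiv.Perm (Fin n))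
    (k : ℕ) : Matrix (Fin n) (Fin n) ℝ :=
  pinv (mask Q (Sk π (k + 1))) - pinv (mask Q (Sk π k))

theorem pinv_eq_of_moorePenrose {m : Type*} [Fintype m] [DecidableEq m] {A B : Matrix m m ℝ}
    (h₁ : A * B * A = A) (h₂ : B * A * B = B)
    (h₃ : (A * B)ᵀ = A * B) (h₄ : (B * A)ᵀ = B * A) : pinv A = B := by
  have hex : ∃ C : Matrix m m ℝ,
      A * C * A = A ∧ C * A * C = C ∧ (A * C)ᵀ = A * C ∧ (C * A)ᵀ = C * A :=
    ⟨B, h₁, h₂, h₃, h₄⟩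
  rw [pinv, dif_pos hex]
  obtain ⟨g₁, g₂, g₃, g₄⟩ := hex.choose_spec
  set C := hex.choose
  -- both `A * C` and `A * B` are the orthogonal projection onto the range of `A`
  have hAC : A * C = A * B := by
    calc A * C = (A * B * A * C)ᵀ := by rw [h₁, g₃]
      _ = (A * C)ᵀ * (A * B)ᵀ := by simp only [transpose_mul, Matrix.mul_assoc]
      _ = A * B := by rw [g₃, h₃, ← Matrix.mul_assoc, g₁]
  have hCA : C * A = B * A := by
    calc C * A = (C * (A * B * A))ᵀ := by rw [h₁, g₄]
      _ = (B * A)ᵀ * (C * A)ᵀ := by simp only [transpose_mul, Matrix.mul_assoc]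
      _ = B * A := by rw [g₄, h₄, Matrix.mul_assoc, ← Matrix.mul_assoc A, g₁]
  rw [← g₂, hCA, Matrix.mul_assoc, hAC, ← Matrix.mul_assoc, h₂]

theorem Matrix.PosDef.isSymm {m : Type*} [Fintype m] {Q : Matrix m m ℝ} (hQ : Q.PosDef) :
    Q.IsSymm :=
  isHermitian_iff_isSymm.mp hQ.isHermitian

section CoordProj

variable {m : Type*} [DecidableEq m]

noncomputable def coordProj (S : Finset m) : Matrix m m ℝ :=
  diagonal fun i => if i ∈ S then 1 else 0

theorem coordProj_transpose (S : Finset m) : (coordProj S)ᵀ = coordProj S :=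
  diagonal_transpose _

theorem coordProj_insert {S : Finset m} {j : m} (hj : j ∉ S) :
    coordProj (insert j S) = coordProj S + vecMulVec (Pi.single j 1) (Pi.single j 1) := by
  ext i k
  simp only [coordProj, diagonal_apply, Matrix.add_apply, vecMulVec_apply, Pi.single_apply,
    Finset.mem_insert]
  grind

variable [Fintype m]

theorem coordProj_mul_coordProj (S T : Finset m) :
    coordProj S * coordProj T = coordProj (S ∩ T) := by
  simp only [coordProj, diagonal_mul_diagonal, Finset.mem_inter, ite_zero_mul_ite_zero, mul_one]

theorem coordProj_mulVec_apply (S : Finset m) (x : m → ℝ) (i : m) :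
    (coordProj S *ᵥ x) i = if i ∈ S then x i else 0 := by
  simp [coordProj, mulVec_diagonal]

theorem coordProj_mulVec_dotProduct (S : Finset m) (x y : m → ℝ) :
    (coordProj S *ᵥ x) ⬝ᵥ y = x ⬝ᵥ (coordProj S *ᵥ y) := by
  rw [← vecMul_transpose, coordProj_transpose, ← dotProduct_mulVec]

theorem coordProj_univ : coordProj (Finset.univ : Finset m) = 1 := by
  simp [coordProj]

end CoordProj

section Mask

variable {n : ℕ} {Q : Matrix (Fin n) (Fin n) ℝ}

theorem mask_eq_coordProj_mul_mul_coordProj (S : Finset (Fin n)) :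
    mask Q S = coordProj S * Q * coordProj S := by
  ext i k
  simp only [mask, coordProj, mul_diagonal, diagonal_mul, of_apply, ite_and]
  split_ifs <;> simp

theorem mask_isSymm (hQ : Q.IsSymm) (S : Finset (Fin n)) : (mask Q S).IsSymm := by
  rw [IsSymm, mask_eq_coordProj_mul_mul_coordProj, transpose_mul, transpose_mul,
    coordProj_transpose, hQ.eq, Matrix.mul_assoc]

end Mask

section MaskInverse

variable {n : ℕ} {Q B : Matrix (Fin n) (Fin n) ℝ} {S : Finset (Fin n)}

/-- `B` is the inverse of the principal submatrix `Q[S, S]`, padded with zeros. -/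
structure IsMaskInverse (Q : Matrix (Fin n) (Fin n) ℝ) (S : Finset (Fin n))
    (B : Matrix (Fin n) (Fin n) ℝ) : Prop where
  isSymm : B.IsSymm
  mul_coordProj : B * coordProj S = B
  mul_mask : B * mask Q S = coordProj S

namespace IsMaskInverse

theorem coordProj_mul (hB : IsMaskInverse Q S B) : coordProj S * B = B := by
  simpa only [transpose_mul, coordProj_transpose, hB.isSymm.eq] using
    congrArg transpose hB.mul_coordProj

theorem coordProj_mul_of_subset (hB : IsMaskInverse Q S B) {T : Finset (Fin n)} (hST : S ⊆ T) :
    coordProj T * B = B := by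
  rw [← hB.coordProj_mul, ← Matrix.mul_assoc, coordProj_mul_coordProj,
    Finset.inter_eq_right.mpr hST]

theorem mul_coordProj_of_subset (hB : IsMaskInverse Q S B) {T : Finset (Fin n)} (hST : S ⊆ T) :
    B * coordProj T = B := by
  rw [← hB.mul_coordProj, Matrix.mul_assoc, coordProj_mul_coordProj,
    Finset.inter_eq_left.mpr hST]

theorem mul_mul_coordProj (hB : IsMaskInverse Q S B) : B * Q * coordProj S = coordProj S := by
  have h := hB.mul_mask
  rwa [mask_eq_coordProj_mul_mul_coordProj, ← Matrix.mul_assoc, ← Matrix.mul_assoc,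
    hB.mul_coordProj] at h

theorem coordProj_mul_mul (hQ : Q.IsSymm) (hB : IsMaskInverse Q S B) :
    coordProj S * Q * B = coordProj S := by
  simpa only [transpose_mul, coordProj_transpose, hB.isSymm.eq, hQ.eq, Matrix.mul_assoc] using
    congrArg transpose hB.mul_mul_coordProj

theorem pinv_eq (hQ : Q.IsSymm) (hB : IsMaskInverse Q S B) : pinv (mask Q S) = B := by
  have hmask : mask Q S * B = coordProj S := by
    rw [mask_eq_coordProj_mul_mul_coordProj, Matrix.mul_assoc, hB.coordProj_mul,
      hB.coordProj_mul_mul hQ]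
  refine pinv_eq_of_moorePenrose ?_ ?_ ?_ ?_
  · rw [hmask, mask_eq_coordProj_mul_mul_coordProj, ← Matrix.mul_assoc, ← Matrix.mul_assoc,
      coordProj_mul_coordProj, Finset.inter_self]
  · rw [hB.mul_mask, hB.coordProj_mul]
  · rw [hmask, coordProj_transpose]
  · rw [hB.mul_mask, coordProj_transpose]

end IsMaskInverse

theorem isMaskInverse_empty : IsMaskInverse Q ∅ 0 :=
  ⟨isSymm_zero, zero_mul _, by ext; simp [coordProj, mask]⟩

theorem isMaskInverse_univ (hQs : Q.IsSymm) (hQ : IsUnit Q.det) :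
    IsMaskInverse Q Finset.univ Q⁻¹ where
  isSymm := by rw [IsSymm, transpose_nonsing_inv, hQs.eq]
  mul_coordProj := by rw [coordProj_univ, Matrix.mul_one]
  mul_mask := by
    rw [mask_eq_coordProj_mul_mul_coordProj, coordProj_univ, Matrix.mul_one, Matrix.one_mul,
      nonsing_inv_mul _ hQ]

end MaskInverse

section Bordering

variable {n : ℕ} {Q B : Matrix (Fin n) (Fin n) ℝ} {S : Finset (Fin n)} {j : Fin n}

/-- For `B` the padded `Q[S, S]⁻¹`, this is the vector `(-Q[S, S]⁻¹ Q[S, j], 1)` on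
`S ∪ {j}`. -/
noncomputable def borderVec (Q B : Matrix (Fin n) (Fin n) ℝ) (j : Fin n) : Fin n → ℝ :=
  Pi.single j 1 - B *ᵥ Q *ᵥ Pi.single j 1

namespace IsMaskInverse

theorem coordProj_insert_mulVec_borderVec (hB : IsMaskInverse Q S B) :
    coordProj (insert j S) *ᵥ borderVec Q B j = borderVec Q B j := by
  rw [borderVec, mulVec_sub, mulVec_mulVec, hB.coordProj_mul_of_subset (Finset.subset_insert j S)]
  congr 1
  ext i
  rw [coordProj_mulVec_apply]
  split_ifs with hi
  · rfl
  · simp [show i ≠ j by rintro rfl; exact hi (Finset.mem_insert_self _ _)]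

theorem borderVec_apply_self (hB : IsMaskInverse Q S B) (hj : j ∉ S) : borderVec Q B j j = 1 := by
  rw [borderVec, Pi.sub_apply, ← hB.coordProj_mul, ← mulVec_mulVec, coordProj_mulVec_apply,
    if_neg hj]
  simp

theorem coordProj_mulVec_mulVec_borderVec (hQ : Q.IsSymm) (hB : IsMaskInverse Q S B) :
    coordProj S *ᵥ Q *ᵥ borderVec Q B j = 0 := by
  rw [borderVec, mulVec_sub, mulVec_sub, mulVec_mulVec, mulVec_mulVec, mulVec_mulVec,
    hB.coordProj_mul_mul hQ, mulVec_mulVec, sub_self]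

theorem coordProj_insert_mulVec_mulVec_borderVec (hQ : Q.IsSymm) (hB : IsMaskInverse Q S B)
    (hj : j ∉ S) :
    coordProj (insert j S) *ᵥ Q *ᵥ borderVec Q B j =
      (Q *ᵥ borderVec Q B j) j • Pi.single j 1 := by
  rw [coordProj_insert hj, add_mulVec, hB.coordProj_mulVec_mulVec_borderVec hQ, zero_add,
    vecMulVec_mulVec, single_one_dotProduct, op_smul_eq_smul]

theorem mask_insert_mulVec_borderVec (hQ : Q.IsSymm) (hB : IsMaskInverse Q S B) (hj : j ∉ S) :
    mask Q (insert j S) *ᵥ borderVec Q B j = (Q *ᵥ borderVec Q B j) j • Pi.single j 1 := by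
  rw [mask_eq_coordProj_mul_mul_coordProj, ← mulVec_mulVec, hB.coordProj_insert_mulVec_borderVec,
    ← mulVec_mulVec, hB.coordProj_insert_mulVec_mulVec_borderVec hQ hj]

theorem borderVec_dotProduct_mulVec (hQ : Q.IsSymm) (hB : IsMaskInverse Q S B) (hj : j ∉ S) :
    borderVec Q B j ⬝ᵥ Q *ᵥ borderVec Q B j = (Q *ᵥ borderVec Q B j) j := by
  conv_lhs => arg 1; rw [← hB.coordProj_insert_mulVec_borderVec]
  rw [coordProj_mulVec_dotProduct, hB.coordProj_insert_mulVec_mulVec_borderVec hQ hj,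
    dotProduct_smul, dotProduct_single_one, hB.borderVec_apply_self hj, smul_eq_mul, mul_one]

/-- `(Q *ᵥ borderVec Q B j) j` is the Schur complement of `Q[S, S]` in
`Q[S ∪ {j}, S ∪ {j}]`. -/
theorem mulVec_borderVec_apply_self_pos (hQ : Q.PosDef) (hB : IsMaskInverse Q S B) (hj : j ∉ S) :
    0 < (Q *ᵥ borderVec Q B j) j := by
  have hQs : Q.IsSymm := hQ.isSymm
  have hv : borderVec Q B j ≠ 0 := fun h => by
    simpa [h] using hB.borderVec_apply_self hj
  simpa [← hB.borderVec_dotProduct_mulVec hQs hj] using hQ.dotProduct_mulVec_pos hv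

theorem mul_mask_insert (hB : IsMaskInverse Q S B) (hj : j ∉ S) :
    B * mask Q (insert j S) =
      coordProj S + vecMulVec (B *ᵥ Q *ᵥ Pi.single j 1) (Pi.single j 1) := by
  rw [mask_eq_coordProj_mul_mul_coordProj, ← Matrix.mul_assoc, ← Matrix.mul_assoc,
    hB.mul_coordProj_of_subset (Finset.subset_insert j S), coordProj_insert hj, Matrix.mul_add,
    hB.mul_mul_coordProj, mul_vecMulVec, ← mulVec_mulVec]

theorem insert (hQ : Q.IsSymm) (hB : IsMaskInverse Q S B) (hj : j ∉ S)
    (hs : (Q *ᵥ borderVec Q B j) j ≠ 0) :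
    IsMaskInverse Q (insert j S)
      (B + ((Q *ᵥ borderVec Q B j) j)⁻¹ •
        vecMulVec (borderVec Q B j) (borderVec Q B j)) where
  isSymm := hB.isSymm.add (IsSymm.smul (transpose_vecMulVec _ _) _)
  mul_coordProj := by
    rw [Matrix.add_mul, hB.mul_coordProj_of_subset (Finset.subset_insert j S), smul_mul_assoc,
      vecMulVec_mul, ← mulVec_transpose, coordProj_transpose,
      hB.coordProj_insert_mulVec_borderVec]
  mul_mask := by
    rw [Matrix.add_mul, hB.mul_mask_insert hj, smul_mul_assoc, vecMulVec_mul,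
      ← mulVec_transpose, (mask_isSymm hQ _).eq, hB.mask_insert_mulVec_borderVec hQ hj,
      vecMulVec_smul, smul_smul, inv_mul_cancel₀ hs, one_smul, add_assoc, ← add_vecMulVec,
      borderVec, add_sub_cancel, coordProj_insert hj]

end IsMaskInverse

end Bordering

section PinvMask

variable {n : ℕ} {Q : Matrix (Fin n) (Fin n) ℝ}

theorem isMaskInverse_pinv_mask (hQ : Q.PosDef) (S : Finset (Fin n)) :
    IsMaskInverse Q S (pinv (mask Q S)) := by
  have hQs : Q.IsSymm := hQ.isSymm
  induction S using Finset.induction_on with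
  | empty =>
    rw [isMaskInverse_empty.pinv_eq hQs]
    exact isMaskInverse_empty
  | insert j S hj ih =>
    have h := ih.insert hQs hj (ih.mulVec_borderVec_apply_self_pos hQ hj).ne'
    rwa [h.pinv_eq hQs]

theorem exists_pinv_mask_insert_sub_eq (hQ : Q.PosDef) {S : Finset (Fin n)} {j : Fin n}
    (hj : j ∉ S) :
    ∃ c : ℝ, 0 ≤ c ∧ ∃ v : Fin n → ℝ,
      pinv (mask Q (insert j S)) - pinv (mask Q S) = c • vecMulVec v v := by
  have hQs : Q.IsSymm := hQ.isSymm
  have hB := isMaskInverse_pinv_mask hQ S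
  have hs := hB.mulVec_borderVec_apply_self_pos hQ hj
  refine ⟨_, (inv_pos.mpr hs).le, borderVec Q (pinv (mask Q S)) j, ?_⟩
  rw [(hB.insert hQs hj hs.ne').pinv_eq hQs, add_sub_cancel_left]

end PinvMask

theorem posSemidef_smul_vecMulVec_self {m : Type*} [Fintype m] {c : ℝ} (hc : 0 ≤ c)
    (v : m → ℝ) :
    (c • vecMulVec v v).PosSemidef := by
  simpa using (posSemidef_vecMulVec_self_star v).smul hc

theorem rank_smul_vecMulVec_le_one {m : Type*} [Fintype m] (c : ℝ) (v : m → ℝ) :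
    (c • vecMulVec v v).rank ≤ 1 := by
  rw [← smul_vecMulVec]
  exact rank_vecMulVec_le _ _

section Chain

variable {n : ℕ} (π : Equiv.Perm (Fin n))

theorem Sk_zero : Sk π 0 = ∅ := by
  simp [Sk]

theorem Sk_eq_univ : Sk π n = Finset.univ := by
  ext x
  simp only [Sk, Finset.mem_image, Finset.mem_filter, Finset.mem_univ, true_and, iff_true]
  exact ⟨π.symm x, (π.symm x).isLt, π.apply_symm_apply x⟩

theorem Sk_succ (k : Fin n) : Sk π (k + 1) = insert (π k) (Sk π k) := by
  ext x
  simp only [Sk, Finset.mem_image, Finset.mem_insert, Finset.mem_filter, Finset.mem_univ,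
    true_and, Nat.lt_succ_iff_lt_or_eq, Fin.val_inj, or_and_right, exists_or, exists_eq_left]
  rw [or_comm, eq_comm]

theorem apply_notMem_Sk (k : Fin n) : π k ∉ Sk π k := by
  simp [Sk]

end Chain

theorem stmt14_general {n : ℕ} (Q : Matrix (Fin n) (Fin n) ℝ)
    (hQ : Q.PosDef)
    (π : Equiv.Perm (Fin n)) :
    (∑ k : Fin n, Rinc Q π k) = Q⁻¹ ∧
      ∀ k : Fin n, (Rinc Q π k).PosSemidef ∧ (Rinc Q π k).rank ≤ 1 := by
  have hQs : Q.IsSymm := hQ.isSymm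
  refine ⟨?_, fun k => ?_⟩
  · rw [Fin.sum_univ_eq_sum_range (Rinc Q π)]
    unfold Rinc
    rw [Finset.sum_range_sub (fun k => pinv (mask Q (Sk π k))), Sk_eq_univ, Sk_zero,
      (isMaskInverse_univ hQs hQ.det_pos.ne'.isUnit).pinv_eq hQs, isMaskInverse_empty.pinv_eq hQs,
      sub_zero]
  · obtain ⟨c, hc, v, hv⟩ := exists_pinv_mask_insert_sub_eq hQ (apply_notMem_Sk π k)
    rw [Rinc, Sk_succ, hv]
    exact ⟨posSemidef_smul_vecMulVec_self hc v, rank_smul_vecMulVec_le_one c v⟩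

/-- for a Stieltjes matrix `Q` and a permutation `π`, the increments
`R(π_k; S_{k-1}^π)` telescope to `Q⁻¹`, and each is positive semidefinite of rank at most
one. -/
theorem stmt14 {n : ℕ} (Q : Matrix (Fin n) (Fin n) ℝ)
    (hQ : Q.PosDef) (hoff : ∀ i j : Fin n, i ≠ j → Q i j ≤ 0)
    (π : Equiv.Perm (Fin n)) :
    (∑ k : Fin n, Rinc Q π k) = Q⁻¹ ∧
      ∀ k : Fin n, (Rinc Q π k).PosSemidef ∧ (Rinc Q π k).rank ≤ 1 :=
  stmt14_general Q hQ π
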